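/- Let κ be an infinite cardinal with cf(κ) = ω, let Y be an infinite Hausdorff topological space, and let Z be a topological space with o(Z) ≥ κ. Then κ is not a weak precaliber* for the product space Y × Z. -/

import Mathlib

/-!
An infinite Hausdorff space `Y` contains pairwise disjoint non-empty open sets `V 0, V 1, …`, and
since `cf κ = ω`, a family `W` of `κ` non-empty open subsets of `Z` splits into countably many
pieces `W n`, each of size `< κ`. The `κ` open boxes `V n ×ˢ w` with `w ∈ W n` form a family
in which boxes from different pieces are disjoint, so a linked subfamily lies in a single piece
and has size `< κ`.
-/

open Cardinal Set

universe u

/-- `κ` is a caliber for `X`: every κ-indexed family of non-empty open sets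
(repetitions allowed) has a κ-sized subfamily with non-empty intersection. -/
def IsCaliber (X : Type u) [TopologicalSpace X] (κ : Cardinal.{u}) : Prop :=
  ∀ {ι : Type u} (U : ι → Set X), #ι = κ → (∀ i, IsOpen (U i)) → (∀ i, (U i).Nonempty) →
    ∃ J : Set ι, #J = κ ∧ (⋂ i ∈ J, U i).Nonempty

/-- `κ` is a precaliber for `X`: every κ-indexed family of non-empty open sets
has a κ-sized subfamily which is centered. -/
def IsPrecaliber (X : Type u) [TopologicalSpace X] (κ : Cardinal.{u}) : Prop :=
  ∀ {ι : Type u} (U : ι → Set X), #ι = κ → (∀ i, IsOpen (U i)) → (∀ i, (U i).Nonempty) →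
    ∃ J : Set ι, #J = κ ∧
      ∀ s : Finset ι, ↑s ⊆ J → s.Nonempty → (⋂ i ∈ s, U i).Nonempty

/-- `κ` is a weak precaliber for `X`: every κ-indexed family of non-empty open sets
has a κ-sized subfamily which is linked. -/
def IsWeakPrecaliber (X : Type u) [TopologicalSpace X] (κ : Cardinal.{u}) : Prop :=
  ∀ {ι : Type u} (U : ι → Set X), #ι = κ → (∀ i, IsOpen (U i)) → (∀ i, (U i).Nonempty) →
    ∃ J : Set ι, #J = κ ∧ ∀ i ∈ J, ∀ j ∈ J, (U i ∩ U j).Nonempty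

/-- `κ` is a caliber* for `X`: every family of non-empty open sets of cardinality `κ`
has a subfamily of cardinality `κ` with non-empty intersection. -/
def IsCaliberStar (X : Type u) [TopologicalSpace X] (κ : Cardinal.{u}) : Prop :=
  ∀ 𝒰 : Set (Set X), #𝒰 = κ → (∀ U ∈ 𝒰, IsOpen U) → (∀ U ∈ 𝒰, U.Nonempty) →
    ∃ 𝒱 ⊆ 𝒰, #𝒱 = κ ∧ (⋂₀ 𝒱).Nonempty

/-- `κ` is a precaliber* for `X`: every family of non-empty open sets of cardinality `κ`
has a centered subfamily of cardinality `κ`. -/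
def IsPrecaliberStar (X : Type u) [TopologicalSpace X] (κ : Cardinal.{u}) : Prop :=
  ∀ 𝒰 : Set (Set X), #𝒰 = κ → (∀ U ∈ 𝒰, IsOpen U) → (∀ U ∈ 𝒰, U.Nonempty) →
    ∃ 𝒱 ⊆ 𝒰, #𝒱 = κ ∧
      ∀ s : Finset (Set X), ↑s ⊆ 𝒱 → s.Nonempty → (⋂₀ (↑s : Set (Set X))).Nonempty

/-- `κ` is a weak precaliber* for `X`: every family of non-empty open sets of
cardinality `κ` has a linked subfamily of cardinality `κ`. -/
def IsWeakPrecaliberStar (X : Type u) [TopologicalSpace X] (κ : Cardinal.{u}) : Prop :=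
  ∀ 𝒰 : Set (Set X), #𝒰 = κ → (∀ U ∈ 𝒰, IsOpen U) → (∀ U ∈ 𝒰, U.Nonempty) →
    ∃ 𝒱 ⊆ 𝒰, #𝒱 = κ ∧ ∀ U ∈ 𝒱, ∀ V ∈ 𝒱, (U ∩ V).Nonempty

/-- `o X` : the number of open subsets of `X`. -/
def oCard (X : Type u) [TopologicalSpace X] : Cardinal.{u} :=
  #{U : Set X | IsOpen U}

/-- A cellular family: a pairwise disjoint collection of non-empty open sets. -/
def IsCellularFamily (X : Type u) [TopologicalSpace X] (𝒰 : Set (Set X)) : Prop :=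
  (∀ U ∈ 𝒰, IsOpen U) ∧ (∀ U ∈ 𝒰, U.Nonempty) ∧ 𝒰.Pairwise Disjoint


theorem le_mk_sdiff_singleton {α : Type u} {κ : Cardinal.{u}} (hκ : ℵ₀ ≤ κ) {s : Set α}
    (hs : κ ≤ #s) (a : α) : κ ≤ #(s \ {a} : Set α) := by
  by_contra! h
  have hs_le : #s ≤ #(s \ {a} : Set α) + 1 :=
    (mk_le_mk_of_subset (subset_insert_sdiff_singleton a s)).trans mk_insert_le
  exact (hs.trans hs_le).not_gt (add_one_lt_of_lt hκ h)

theorem exists_nat_fibers_lt_of_cof_ord_eq_aleph0 {α : Type u} {κ : Cardinal.{u}}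
    (hκ : ℵ₀ ≤ κ) (hcof : κ.ord.cof = ℵ₀) (hα : #α ≤ κ) :
    ∃ c : α → ℕ, ∀ n, #(c ⁻¹' {n}) < κ := by
  rw [← mk_ord_toType κ, le_def] at hα
  obtain ⟨e⟩ := hα
  obtain ⟨S, hS, hScard⟩ := Order.exists_cof_eq κ.ord.ToType
  rw [Ordinal.cof_toType, hcof] at hScard
  have hSne : S.Nonempty := by
    rw [← nonempty_coe_sort, ← mk_ne_zero_iff, hScard]
    exact aleph0_ne_zero
  obtain ⟨g, rfl⟩ := (le_aleph0_iff_set_countable.1 hScard.le).exists_eq_range hSne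
  choose c hc using fun a => exists_range_iff.1 (hS (e a))
  refine ⟨c, fun n => ?_⟩
  calc #(c ⁻¹' {n}) = #(e '' (c ⁻¹' {n})) := (mk_image_eq e.injective).symm
    _ ≤ #(Iic (g n)) := mk_le_mk_of_subset <| by
        rintro _ ⟨a, rfl, rfl⟩
        exact hc a
    _ < κ := by simpa using mk_Iic_lt (g n) (by simp) (by simpa using hκ)

theorem IsWeakPrecaliberStar.exists_le_mk_fiber {X : Type u} [TopologicalSpace X]
    {κ : Cardinal.{u}} (h : IsWeakPrecaliberStar X κ) (hκ : κ ≠ 0) {ι : Type u} {β : Type*}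
    {U : ι → Set X} (hU : Function.Injective U) (hι : #ι = κ) (hopen : ∀ i, IsOpen (U i))
    (hne : ∀ i, (U i).Nonempty) (c : ι → β)
    (hdisj : ∀ i j, c i ≠ c j → Disjoint (U i) (U j)) :
    ∃ b, κ ≤ #(c ⁻¹' {b}) := by
  obtain ⟨𝒱, h𝒱U, h𝒱, hlinked⟩ := h (range U) (by rw [mk_range_eq U hU, hι])
    (forall_mem_range.2 hopen) (forall_mem_range.2 hne)
  have hJ : #(U ⁻¹' 𝒱) = κ := by
    rw [← h𝒱, ← mk_image_eq hU, image_preimage_eq_of_subset h𝒱U]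
  obtain ⟨i₀, hi₀⟩ : (U ⁻¹' 𝒱).Nonempty := by
    rw [← nonempty_coe_sort, ← mk_ne_zero_iff, hJ]
    exact hκ
  refine ⟨c i₀, hJ.symm.le.trans (mk_le_mk_of_subset fun i hi => ?_)⟩
  by_contra hci
  exact not_disjoint_iff_nonempty_inter.2 (hlinked _ hi _ hi₀) (hdisj i i₀ hci)

theorem stmt19 (κ : Cardinal.{u}) (hκ : ℵ₀ ≤ κ) (hcof : κ.ord.cof = ℵ₀)
    (Y : Type u) [TopologicalSpace Y] [T2Space Y] [Infinite Y]
    (Z : Type u) [TopologicalSpace Z] (hZ : κ ≤ oCard Z) :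
    ¬ IsWeakPrecaliberStar (Y × Z) κ := by
  intro hYZ
  obtain ⟨V, hVinf, hVopen, hVdisj⟩ := exists_seq_infinite_isOpen_pairwise_disjoint Y
  obtain ⟨W, hW, hWcard⟩ := le_mk_iff_exists_subset.1 (le_mk_sdiff_singleton hκ hZ ∅)
  obtain ⟨c, hc⟩ := exists_nat_fibers_lt_of_cof_ord_eq_aleph0 hκ hcof hWcard.le
  let U : W → Set (Y × Z) := fun w => V (c w) ×ˢ (w : Set Z)
  have hUne : ∀ w, (U w).Nonempty := fun w =>
    (hVinf _).nonempty.prod (nonempty_iff_ne_empty.2 (hW w.2).2)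
  have hUinj : Function.Injective U := fun w w' h =>
    Subtype.ext ((prod_eq_prod_iff_of_nonempty (hUne w)).1 h).2
  obtain ⟨n, hn⟩ := hYZ.exists_le_mk_fiber (aleph0_pos.trans_le hκ).ne' hUinj hWcard
    (fun w => (hVopen _).prod (hW w.2).1) hUne c
    (fun w w' h => disjoint_prod.2 (Or.inl (hVdisj h)))
  exact (hn.trans_lt (hc n)).false
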